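/- sp(3) is the internal direct sum h ⊕ m₁ ⊕ m₂ ⊕ m₃, and the brackets satisfy [m₁, m₂] ⊆ m₃, [m₂, m₃] ⊆ m₁, [m₃, m₁] ⊆ m₂, each of these three bracket spaces being nonzero, and [mᵢ, mᵢ] ⊆ h for i = 1, 2, 3. -/

import Mathlib

open Quaternion

namespace Sp3

/-- `M₁(x) ∈ sp(3)` has entry `x` in position `(1,2)`, `−x̄` in position `(2,1)`, zeros
elsewhere (indices `0,1,2` correspond to the paper's `1,2,3`). -/
noncomputable def M1 (x : ℍ[ℝ]) : Matrix (Fin 3) (Fin 3) ℍ[ℝ] :=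
  Matrix.single 0 1 x - Matrix.single 1 0 (star x)

/-- `M₂(y) ∈ sp(3)` has entry `y` in position `(1,3)`, `−ȳ` in position `(3,1)`. -/
noncomputable def M2 (y : ℍ[ℝ]) : Matrix (Fin 3) (Fin 3) ℍ[ℝ] :=
  Matrix.single 0 2 y - Matrix.single 2 0 (star y)

/-- `M₃(z) ∈ sp(3)` has entry `z` in position `(2,3)`, `−z̄` in position `(3,2)`. -/
noncomputable def M3 (z : ℍ[ℝ]) : Matrix (Fin 3) (Fin 3) ℍ[ℝ] :=
  Matrix.single 1 2 z - Matrix.single 2 1 (star z)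

/-- Membership in `h ⊂ sp(3)`: the diagonal matrices whose diagonal entries are purely
imaginary quaternions. -/
def InH (X : Matrix (Fin 3) (Fin 3) ℍ[ℝ]) : Prop :=
  (∀ i j : Fin 3, i ≠ j → X i j = 0) ∧ (∀ i : Fin 3, (X i i).re = 0)

/-- The element of `m = m₁ ⊕ m₂ ⊕ m₃` with coordinates `(x, y, z) ∈ ℍ³`. -/
noncomputable def Mm (v : ℍ[ℝ] × ℍ[ℝ] × ℍ[ℝ]) : Matrix (Fin 3) (Fin 3) ℍ[ℝ] :=
  M1 v.1 + M2 v.2.1 + M3 v.2.2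

/-- The off-diagonal part of `X`, i.e. the projection of `X ∈ sp(3)` onto `m` along `h`. -/
noncomputable def offDiag (X : Matrix (Fin 3) (Fin 3) ℍ[ℝ]) : Matrix (Fin 3) (Fin 3) ℍ[ℝ] :=
  Matrix.of fun i j => if i = j then 0 else X i j

end Sp3

/-!
Every element of `h` and every `Mᵢ(w)` is skew-Hermitian. Conversely a skew-Hermitian `X` is
determined by its diagonal, whose entries are purely imaginary, and by its entries
`X₁₂, X₁₃, X₂₃`; reading these off gives the unique decomposition. The mixed brackets are
computed entrywise, e.g. `[M₁(x), M₂(y)] = M₃(−x̄y)`, while `[Mᵢ(w), Mᵢ(w')]` is diagonal and,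
as a bracket of skew-Hermitian matrices, skew-Hermitian, hence lies in `h`.
-/

open Matrix

theorem star_lie_of_star_eq_neg {A : Type*} [Ring A] [StarRing A] {a b : A}
    (ha : star a = -a) (hb : star b = -b) : star ⁅a, b⁆ = -⁅a, b⁆ := by
  rw [Ring.lie_def, star_sub, star_mul, star_mul, ha, hb]
  noncomm_ring

theorem Matrix.conjTranspose_single_sub_single_star {n α : Type*} [DecidableEq n] [AddGroup α]
    [StarAddMonoid α] (i j : n) (a : α) :
    (single i j a - single j i (star a))ᴴ = -(single i j a - single j i (star a)) := by
  rw [conjTranspose_sub, conjTranspose_single, conjTranspose_single, star_star, neg_sub]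

namespace Sp3

variable {X D : Matrix (Fin 3) (Fin 3) ℍ[ℝ]}

theorem M1_eq (x : ℍ[ℝ]) : M1 x = !![0, x, 0; -star x, 0, 0; 0, 0, 0] := by
  ext i j : 1; fin_cases i <;> fin_cases j <;> simp [M1, single]

theorem M2_eq (y : ℍ[ℝ]) : M2 y = !![0, 0, y; 0, 0, 0; -star y, 0, 0] := by
  ext i j : 1; fin_cases i <;> fin_cases j <;> simp [M2, single]

theorem M3_eq (z : ℍ[ℝ]) : M3 z = !![0, 0, 0; 0, 0, z; 0, -star z, 0] := by
  ext i j : 1; fin_cases i <;> fin_cases j <;> simp [M3, single]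

theorem conjTranspose_M1 (x : ℍ[ℝ]) : (M1 x)ᴴ = -M1 x :=
  conjTranspose_single_sub_single_star _ _ x

theorem conjTranspose_M2 (y : ℍ[ℝ]) : (M2 y)ᴴ = -M2 y :=
  conjTranspose_single_sub_single_star _ _ y

theorem conjTranspose_M3 (z : ℍ[ℝ]) : (M3 z)ᴴ = -M3 z :=
  conjTranspose_single_sub_single_star _ _ z

theorem lie_M1_M2 (x y : ℍ[ℝ]) : ⁅M1 x, M2 y⁆ = M3 (-(star x * y)) := by
  ext i j : 1
  fin_cases i <;> fin_cases j <;> simp [Ring.lie_def, M1_eq, M2_eq, M3_eq]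

theorem lie_M2_M3 (y z : ℍ[ℝ]) : ⁅M2 y, M3 z⁆ = M1 (-(y * star z)) := by
  ext i j : 1
  fin_cases i <;> fin_cases j <;> simp [Ring.lie_def, M1_eq, M2_eq, M3_eq]

theorem lie_M3_M1 (z x : ℍ[ℝ]) : ⁅M3 z, M1 x⁆ = M2 (-(x * z)) := by
  ext i j : 1
  fin_cases i <;> fin_cases j <;> simp [Ring.lie_def, M1_eq, M2_eq, M3_eq]

theorem lie_M1_M1 (x x' : ℍ[ℝ]) :
    ⁅M1 x, M1 x'⁆ = diagonal ![x' * star x - x * star x', star x' * x - star x * x', 0] := by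
  ext i j : 1
  fin_cases i <;> fin_cases j <;> simp [Ring.lie_def, M1_eq, neg_add_eq_sub]

theorem lie_M2_M2 (y y' : ℍ[ℝ]) :
    ⁅M2 y, M2 y'⁆ = diagonal ![y' * star y - y * star y', 0, star y' * y - star y * y'] := by
  ext i j : 1
  fin_cases i <;> fin_cases j <;> simp [Ring.lie_def, M2_eq, neg_add_eq_sub]

theorem lie_M3_M3 (z z' : ℍ[ℝ]) :
    ⁅M3 z, M3 z'⁆ = diagonal ![0, z' * star z - z * star z', star z' * z - star z * z'] := by
  ext i j : 1
  fin_cases i <;> fin_cases j <;> simp [Ring.lie_def, M3_eq, neg_add_eq_sub]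

theorem M1_ne_zero {x : ℍ[ℝ]} (hx : x ≠ 0) : M1 x ≠ 0 :=
  fun h => hx (by simpa [M1_eq] using congrFun (congrFun h 0) 1)

theorem M2_ne_zero {y : ℍ[ℝ]} (hy : y ≠ 0) : M2 y ≠ 0 :=
  fun h => hy (by simpa [M2_eq] using congrFun (congrFun h 0) 2)

theorem M3_ne_zero {z : ℍ[ℝ]} (hz : z ≠ 0) : M3 z ≠ 0 :=
  fun h => hz (by simpa [M3_eq] using congrFun (congrFun h 1) 2)

theorem inH_diagonal {d : Fin 3 → ℍ[ℝ]} (hd : star d = -d) : InH (diagonal d) :=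
  ⟨fun _ _ hij => diagonal_apply_ne d hij,
    fun i => by simpa using Quaternion.star_eq_neg.mp (congrFun hd i)⟩

theorem InH.eq_diagonal_diag (hX : InH X) : X = diagonal (diag X) := by
  ext i j : 1
  by_cases hij : i = j
  · simp [hij]
  · simp [hij, hX.1 i j hij]

theorem InH.conjTranspose_eq_neg (hX : InH X) : Xᴴ = -X := by
  have hdiag : star (diag X) = -diag X := funext fun i => Quaternion.star_eq_neg.mpr (hX.2 i)
  rw [hX.eq_diagonal_diag, diagonal_conjTranspose, hdiag, diagonal_neg]
  rfl

theorem inH_diagonal_diag_of_conjTranspose_eq_neg (hX : Xᴴ = -X) : InH (diagonal (diag X)) :=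
  inH_diagonal (by rw [← diag_conjTranspose, hX, diag_neg])

theorem inH_of_conjTranspose_eq_neg_of_eq_diagonal {d : Fin 3 → ℍ[ℝ]} (hX : Xᴴ = -X)
    (hXd : X = diagonal d) : InH X := by
  subst hXd
  simpa using inH_diagonal_diag_of_conjTranspose_eq_neg hX

theorem eq_diagonal_diag_add_M1_add_M2_add_M3 (hX : Xᴴ = -X) :
    X = diagonal (diag X) + M1 (X 0 1) + M2 (X 0 2) + M3 (X 1 2) := by
  have hX' (i j : Fin 3) : X j i = -star (X i j) := by
    rw [← conjTranspose_apply, hX, neg_apply, neg_neg]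
  ext i j : 1
  fin_cases i <;> fin_cases j <;> simp [M1_eq, M2_eq, M3_eq, hX' 0 1, hX' 0 2, hX' 1 2]

theorem eq_components_of_eq_add_M1_add_M2_add_M3 (hD : InH D) {x y z : ℍ[ℝ]}
    (hX : X = D + M1 x + M2 y + M3 z) :
    D = diagonal (diag X) ∧ x = X 0 1 ∧ y = X 0 2 ∧ z = X 1 2 := by
  subst hX
  have hD01 := hD.1 0 1 (by decide)
  have hD02 := hD.1 0 2 (by decide)
  have hD12 := hD.1 1 2 (by decide)
  refine ⟨?_, ?_, ?_, ?_⟩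
  · conv_lhs => rw [hD.eq_diagonal_diag]
    congr 1
    ext i : 1
    fin_cases i <;> simp [M1_eq, M2_eq, M3_eq]
  all_goals simp [M1_eq, M2_eq, M3_eq, hD01, hD02, hD12]

theorem inH_lie_of_eq_diagonal {A B : Matrix (Fin 3) (Fin 3) ℍ[ℝ]} (hA : Aᴴ = -A)
    (hB : Bᴴ = -B) {d : Fin 3 → ℍ[ℝ]} (h : ⁅A, B⁆ = diagonal d) : InH ⁅A, B⁆ :=
  inH_of_conjTranspose_eq_neg_of_eq_diagonal (star_lie_of_star_eq_neg hA hB) h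

end Sp3

open Sp3 in
/-- `sp(3)` is the internal direct sum `h ⊕ m₁ ⊕ m₂ ⊕ m₃` (each summand is
contained in `sp(3)`, and every `X ∈ sp(3)` decomposes uniquely as a sum of a diagonal
matrix with purely imaginary entries and elements `M₁(x), M₂(y), M₃(z)`); moreover
`[m₁, m₂] ⊆ m₃`, `[m₂, m₃] ⊆ m₁`, `[m₃, m₁] ⊆ m₂`, each of these three bracket spaces is
nonzero, and `[mᵢ, mᵢ] ⊆ h` for `i = 1, 2, 3`. -/
theorem statement14 :
    (∀ X : Matrix (Fin 3) (Fin 3) ℍ[ℝ], InH X → Matrix.conjTranspose X = -X) ∧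
    (∀ x : ℍ[ℝ], Matrix.conjTranspose (M1 x) = -(M1 x)) ∧
    (∀ y : ℍ[ℝ], Matrix.conjTranspose (M2 y) = -(M2 y)) ∧
    (∀ z : ℍ[ℝ], Matrix.conjTranspose (M3 z) = -(M3 z)) ∧
    (∀ X : Matrix (Fin 3) (Fin 3) ℍ[ℝ], Matrix.conjTranspose X = -X →
      ∃! p : Matrix (Fin 3) (Fin 3) ℍ[ℝ] × ℍ[ℝ] × ℍ[ℝ] × ℍ[ℝ],
        InH p.1 ∧ X = p.1 + M1 p.2.1 + M2 p.2.2.1 + M3 p.2.2.2) ∧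
    (∀ x y : ℍ[ℝ], ∃ z : ℍ[ℝ], ⁅M1 x, M2 y⁆ = M3 z) ∧
    (∃ x y : ℍ[ℝ], ⁅M1 x, M2 y⁆ ≠ 0) ∧
    (∀ y z : ℍ[ℝ], ∃ x : ℍ[ℝ], ⁅M2 y, M3 z⁆ = M1 x) ∧
    (∃ y z : ℍ[ℝ], ⁅M2 y, M3 z⁆ ≠ 0) ∧
    (∀ z x : ℍ[ℝ], ∃ y : ℍ[ℝ], ⁅M3 z, M1 x⁆ = M2 y) ∧
    (∃ z x : ℍ[ℝ], ⁅M3 z, M1 x⁆ ≠ 0) ∧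
    (∀ x x' : ℍ[ℝ], InH ⁅M1 x, M1 x'⁆) ∧
    (∀ y y' : ℍ[ℝ], InH ⁅M2 y, M2 y'⁆) ∧
    (∀ z z' : ℍ[ℝ], InH ⁅M3 z, M3 z'⁆) := by
  refine ⟨fun X hX => hX.conjTranspose_eq_neg, conjTranspose_M1, conjTranspose_M2,
    conjTranspose_M3, fun X hX => ?_, fun x y => ⟨_, lie_M1_M2 x y⟩, ⟨1, 1, ?_⟩,
    fun y z => ⟨_, lie_M2_M3 y z⟩, ⟨1, 1, ?_⟩, fun z x => ⟨_, lie_M3_M1 z x⟩, ⟨1, 1, ?_⟩,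
    fun _ _ => inH_lie_of_eq_diagonal (conjTranspose_M1 _) (conjTranspose_M1 _) (lie_M1_M1 _ _),
    fun _ _ => inH_lie_of_eq_diagonal (conjTranspose_M2 _) (conjTranspose_M2 _) (lie_M2_M2 _ _),
    fun _ _ => inH_lie_of_eq_diagonal (conjTranspose_M3 _) (conjTranspose_M3 _) (lie_M3_M3 _ _)⟩
  · refine ⟨(diagonal (diag X), X 0 1, X 0 2, X 1 2),
      ⟨inH_diagonal_diag_of_conjTranspose_eq_neg hX,
        eq_diagonal_diag_add_M1_add_M2_add_M3 hX⟩, ?_⟩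
    rintro ⟨D, x, y, z⟩ ⟨hD, hXD⟩
    obtain ⟨rfl, rfl, rfl, rfl⟩ := eq_components_of_eq_add_M1_add_M2_add_M3 hD hXD
    rfl
  · rw [lie_M1_M2]
    exact M3_ne_zero (by simp)
  · rw [lie_M2_M3]
    exact M1_ne_zero (by simp)
  · rw [lie_M3_M1]
    exact M2_ne_zero (by simp)
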